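/- Let (N, C, A, k) be an approval election with n voters and k ≥ 1. Call two candidates c, c' equivalent if N_c = N_{c'}, and call a set S ⊆ C JR-covering if for every candidate c ∈ C and every set N' ⊆ N_c with |N'| ≥ n/k there exists a voter i ∈ N' with A_i ∩ S ≠ ∅. Then the number of committees of size k satisfying JR equals the sum, over all collections {Q_1, …, Q_j} of pairwise distinct candidate equivalence classes with 1 ≤ j ≤ k whose union Q_1 ∪ … ∪ Q_j is JR-covering, of the number of sets S ⊆ Q_1 ∪ … ∪ Q_j with |S| = k and S ∩ Q_t ≠ ∅ for every t ∈ {1,…,j}. -/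
import Mathlib


open Finset

/-- The set of approvers of candidate `c`. -/
def approvers {V C : Type*} [Fintype V] [DecidableEq C] (A : V → Finset C) (c : C) :
    Finset V :=
  Finset.univ.filter fun i => c ∈ A i

/-- `W` satisfies `t`-EJR+ in the election with ballots `A` and committee size `k`:
for every candidate `c ∉ W`, every `ℓ ∈ {1,…,t}`, and every group `N' ⊆ N_c` of
approvers of `c` with `|N'| ≥ ℓ·n/k`, some voter in `N'` approves at least `ℓ`
members of `W`. -/
def satisfiesTEJRplus {V C : Type*} [Fintype V] [DecidableEq C]
    (A : V → Finset C) (k t : ℕ) (W : Finset C) : Prop :=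
  ∀ c : C, c ∉ W → ∀ ℓ : ℕ, 1 ≤ ℓ → ℓ ≤ t →
    ∀ N' : Finset V, N' ⊆ approvers A c →
      ((ℓ : ℚ) * (Fintype.card V : ℚ)) / (k : ℚ) ≤ (N'.card : ℚ) →
      ∃ i ∈ N', ℓ ≤ (A i ∩ W).card

/-- `W` satisfies JR iff it satisfies `1`-EJR+. -/
def satisfiesJR {V C : Type*} [Fintype V] [DecidableEq C]
    (A : V → Finset C) (k : ℕ) (W : Finset C) : Prop :=
  satisfiesTEJRplus A k 1 W

open scoped Classical

/-- The equivalence class of candidate `c`: all candidates with the same approver set. -/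
def eqClass {V C : Type*} [Fintype V] [Fintype C] [DecidableEq V] [DecidableEq C]
    (A : V → Finset C) (c : C) : Finset C :=
  Finset.univ.filter fun c' => approvers A c' = approvers A c

/-- `S ⊆ C` is JR-covering: for every candidate `c` and every `N' ⊆ N_c` with
`|N'| ≥ n/k` there is a voter in `N'` approving some member of `S`. -/
def JRcovering {V C : Type*} [Fintype V] [DecidableEq C]
    (A : V → Finset C) (k : ℕ) (S : Finset C) : Prop :=
  ∀ c : C, ∀ N' : Finset V, N' ⊆ approvers A c →
    (Fintype.card V : ℚ) / (k : ℚ) ≤ (N'.card : ℚ) →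
    ∃ i ∈ N', (A i ∩ S).Nonempty

section Aux

variable {V C : Type*} [Fintype V] [Fintype C] [DecidableEq V] [DecidableEq C]

lemma mem_approvers' {A : V → Finset C} {i : V} {c : C} :
    i ∈ approvers A c ↔ c ∈ A i := by simp [approvers]

lemma self_mem_eqClass (A : V → Finset C) (c : C) : c ∈ eqClass A c := by
  simp [eqClass]

lemma eqClass_eq_of_mem {A : V → Finset C} {c c0 : C} (h : c ∈ eqClass A c0) :
    eqClass A c = eqClass A c0 := by
  simp only [eqClass, mem_filter, mem_univ, true_and] at h
  ext x
  simp [eqClass, h]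

/-- JR is the same as JR-covering (for `c ∈ S` the condition is automatic). -/
lemma jr_iff_cov (A : V → Finset C) (k : ℕ) (hk : 1 ≤ k) (hn : 0 < Fintype.card V)
    (S : Finset C) : satisfiesJR A k S ↔ JRcovering A k S := by
  constructor
  · intro h c N' hN hcard
    have hpos : (0 : ℚ) < (Fintype.card V : ℚ) / (k : ℚ) := by
      apply div_pos <;> exact_mod_cast (by omega : 0 < _)
    have hNne : N'.Nonempty := by
      rw [← Finset.card_pos]
      exact_mod_cast lt_of_lt_of_le hpos hcard
    by_cases hc : c ∈ S
    · obtain ⟨i, hi⟩ := hNne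
      refine ⟨i, hi, ⟨c, ?_⟩⟩
      exact Finset.mem_inter.mpr ⟨mem_approvers'.mp (hN hi), hc⟩
    · obtain ⟨i, hi, hcard'⟩ := h c hc 1 le_rfl le_rfl N' hN
        (by rwa [Nat.cast_one, one_mul])
      exact ⟨i, hi, Finset.card_pos.mp hcard'⟩
  · intro h c _ ℓ h1 h2 N' hN hcard
    have : ℓ = 1 := le_antisymm h2 h1
    subst this
    rw [Nat.cast_one, one_mul] at hcard
    obtain ⟨i, hi, hne⟩ := h c N' hN hcard
    exact ⟨i, hi, Finset.card_pos.mpr hne⟩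

/-- If `S` meets every class in `Q` and is contained in their union, then a voter
approves a member of the union iff it approves a member of `S`. -/
lemma inter_union_iff {A : V → Finset C} {Q : Finset (Finset C)} {S : Finset C}
    (hQ : Q ⊆ Finset.univ.image (eqClass A)) (hS : S ⊆ Q.biUnion id)
    (hmeet : ∀ q ∈ Q, (S ∩ q).Nonempty) (i : V) :
    (A i ∩ Q.biUnion id).Nonempty ↔ (A i ∩ S).Nonempty := by
  constructor
  · rintro ⟨c', hc'⟩
    rw [Finset.mem_inter, Finset.mem_biUnion] at hc'
    obtain ⟨hc'A, q, hqQ, hc'q⟩ := hc'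
    obtain ⟨c0, -, rfl⟩ := Finset.mem_image.mp (hQ hqQ)
    obtain ⟨c'', hc''⟩ := hmeet _ hqQ
    rw [Finset.mem_inter] at hc''
    simp only [eqClass, mem_filter, mem_univ, true_and, id] at hc'q
    have hc''eq : approvers A c'' = approvers A c0 := by
      have := hc''.2
      simpa [eqClass] using this
    have : i ∈ approvers A c'' := by
      rw [hc''eq, ← hc'q]
      exact mem_approvers'.mpr hc'A
    exact ⟨c'', Finset.mem_inter.mpr ⟨mem_approvers'.mp this, hc''.1⟩⟩
  · rintro ⟨c', hc'⟩
    rw [Finset.mem_inter] at hc'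
    exact ⟨c', Finset.mem_inter.mpr ⟨hc'.1, hS hc'.2⟩⟩

lemma cov_congr {A : V → Finset C} {k : ℕ} {S T : Finset C}
    (h : ∀ i : V, (A i ∩ S).Nonempty ↔ (A i ∩ T).Nonempty) :
    JRcovering A k S ↔ JRcovering A k T := by
  have key : ∀ S T : Finset C, (∀ i : V, (A i ∩ S).Nonempty ↔ (A i ∩ T).Nonempty) →
      JRcovering A k S → JRcovering A k T := by
    intro S T h hc c N' hN hcard
    obtain ⟨i, hi, hne⟩ := hc c N' hN hcard
    exact ⟨i, hi, (h i).mp hne⟩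
  exact ⟨key S T h, key T S fun i => (h i).symm⟩

lemma subset_biUnion_image {A : V → Finset C} {W : Finset C} :
    W ⊆ (W.image (eqClass A)).biUnion id := by
  intro c hc
  exact Finset.mem_biUnion.mpr ⟨eqClass A c, Finset.mem_image_of_mem _ hc,
    self_mem_eqClass A c⟩

lemma meets_image_classes {A : V → Finset C} {W : Finset C} :
    ∀ q ∈ W.image (eqClass A), (W ∩ q).Nonempty := by
  intro q hq
  obtain ⟨c, hc, rfl⟩ := Finset.mem_image.mp hq
  exact ⟨c, Finset.mem_inter.mpr ⟨hc, self_mem_eqClass A c⟩⟩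

end Aux

/-- The number of size-`k` JR committees equals the sum, over all collections `Q` of
pairwise distinct equivalence classes with `1 ≤ |Q| ≤ k` whose union is JR-covering, of
the number of size-`k` subsets of the union meeting every class of the collection. -/
theorem stmt6 {V C : Type*} [Fintype V] [Fintype C] [DecidableEq V] [DecidableEq C]
    (A : V → Finset C) (k : ℕ) (hk : 1 ≤ k) (hkm : k ≤ Fintype.card C)
    (hn : 0 < Fintype.card V) :
    ((Finset.univ : Finset C).powerset.filter
        (fun W => W.card = k ∧ satisfiesJR A k W)).card
      = ∑ Q ∈ ((Finset.univ.image fun c : C => eqClass A c).powerset.filter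
            (fun Q : Finset (Finset C) =>
              1 ≤ Q.card ∧ Q.card ≤ k ∧ JRcovering A k (Q.biUnion id))),
          ((Q.biUnion id).powerset.filter
            (fun S : Finset C => S.card = k ∧ ∀ q ∈ Q, (S ∩ q).Nonempty)).card := by
  set s := ((Finset.univ : Finset C).powerset.filter
      (fun W => W.card = k ∧ satisfiesJR A k W)) with hs
  set t := ((Finset.univ.image fun c : C => eqClass A c).powerset.filter
      (fun Q : Finset (Finset C) =>
        1 ≤ Q.card ∧ Q.card ≤ k ∧ JRcovering A k (Q.biUnion id))) with ht
  have hmem : ∀ W ∈ s, W.image (eqClass A) ∈ t := by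
    intro W hW
    rw [hs, Finset.mem_filter, Finset.mem_powerset] at hW
    obtain ⟨-, hWk, hWjr⟩ := hW
    rw [ht, Finset.mem_filter, Finset.mem_powerset]
    have hWne : W.Nonempty := by
      rw [← Finset.card_pos, hWk]; omega
    refine ⟨Finset.image_subset_image (Finset.subset_univ W), ?_, ?_, ?_⟩
    · rw [Nat.one_le_iff_ne_zero, ← Nat.pos_iff_ne_zero, Finset.card_pos]
      exact hWne.image _
    · exact le_trans Finset.card_image_le (le_of_eq hWk)
    · have hcovW : JRcovering A k W := (jr_iff_cov A k hk hn W).mp hWjr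
      exact (cov_congr (fun i => inter_union_iff
        (Finset.image_subset_image (Finset.subset_univ W))
        subset_biUnion_image meets_image_classes i)).mpr hcovW
  rw [Finset.card_eq_sum_card_fiberwise hmem]
  refine Finset.sum_congr rfl fun Q hQ => ?_
  congr 1
  rw [ht, Finset.mem_filter, Finset.mem_powerset] at hQ
  obtain ⟨hQsub, hQ1, hQk, hQcov⟩ := hQ
  ext S
  simp only [hs, Finset.mem_filter, Finset.mem_powerset]
  constructor
  · rintro ⟨⟨-, hSk, hSjr⟩, hSQ⟩
    subst hSQ
    exact ⟨subset_biUnion_image, hSk, meets_image_classes⟩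
  · rintro ⟨hSsub, hSk, hSmeet⟩
    have hiff := fun i => inter_union_iff hQsub hSsub hSmeet i
    have hcovS : JRcovering A k S := (cov_congr hiff).mp hQcov
    have himg : S.image (eqClass A) = Q := by
      apply Finset.Subset.antisymm
      · intro q hq
        obtain ⟨c, hc, rfl⟩ := Finset.mem_image.mp hq
        obtain ⟨q', hq'Q, hcq'⟩ := Finset.mem_biUnion.mp (hSsub hc)
        obtain ⟨c0, -, rfl⟩ := Finset.mem_image.mp (hQsub hq'Q)
        rw [eqClass_eq_of_mem hcq']
        exact hq'Q
      · intro q hq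
        obtain ⟨c, hc⟩ := hSmeet q hq
        rw [Finset.mem_inter] at hc
        obtain ⟨c0, -, rfl⟩ := Finset.mem_image.mp (hQsub hq)
        rw [← eqClass_eq_of_mem hc.2]
        exact Finset.mem_image_of_mem _ hc.1
    exact ⟨⟨Finset.subset_univ S, hSk, (jr_iff_cov A k hk hn S).mpr hcovS⟩, himg⟩
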